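/- For all sufficiently large ℓ (so that t_ℓ, μ_s(ℓ) and μ_u(ℓ) are defined), the vectors (1, (1 − μ_s(ℓ))·y_ℓ/K) and (1, (1 − μ_u(ℓ))·y_ℓ/K) are eigenvectors of the matrix M_ℓ = [[1, −K/y_ℓ], [λ·c_ℓ, δ·y_ℓ^{δ−1} − (λK/y_ℓ)·c_ℓ]] (with c_ℓ = √(1 − ((y_ℓ − y_ℓ^δ)/λ)²)) for the eigenvalues μ_s(ℓ) and μ_u(ℓ) respectively; moreover (1 − μ_s(ℓ))·y_ℓ/K → 0 and (1 − μ_u(ℓ))·y_ℓ/K → λ as ℓ → ∞, i.e., the normalized stable directions tend to (1,0) and the normalized unstable directions tend to the direction of (1,λ). -/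

import Mathlib

/-!
The trace and determinant of `M_ℓ` are `t_ℓ` and `d_ℓ`, so `μ_s(ℓ)` and `μ_u(ℓ)` are the roots of
its characteristic polynomial, and for a `2 × 2` matrix `A` with `A₀₁ ≠ 0` every such root `μ` has the
eigenvector `(1, (μ - A₀₀) / A₀₁)`; here `(μ - 1) / (-K / y_ℓ) = (1 - μ) y_ℓ / K`.

For the limits, multiply by `y_ℓ → 0`: since `y_ℓ · exp(2πℓ/K) = 1` we get `t_ℓ y_ℓ → -Kλ`, while
`d_ℓ y_ℓ² → 0`, hence `√(t_ℓ² - 4d_ℓ) · y_ℓ → Kλ`. So `μ_s(ℓ) y_ℓ → 0` and `μ_u(ℓ) y_ℓ → -Kλ`.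
The same limit makes the discriminant eventually positive.
-/

open Filter Topology Matrix

/-- `y_ℓ = exp(−2πℓ/K)`, the `y`-coordinate of the fixed point `p_ℓ`. -/
noncomputable def yFix (K : ℝ) (ℓ : ℕ) : ℝ :=
  Real.exp (-(2 * Real.pi * (ℓ : ℝ)) / K)

/-- `d_ℓ = δ·exp(−2π(δ−1)ℓ/K)`, the determinant of the derivative at `p_ℓ`. -/
noncomputable def detFix (K δ : ℝ) (ℓ : ℕ) : ℝ :=
  δ * Real.exp (-(2 * Real.pi * (δ - 1) * (ℓ : ℝ)) / K)

/-- `t_ℓ`, the trace of the derivative at `p_ℓ`. -/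
noncomputable def traceFix (K δ lam : ℝ) (ℓ : ℕ) : ℝ :=
  1 + δ * Real.exp (-(2 * Real.pi * (δ - 1) * (ℓ : ℝ)) / K)
    - K * Real.exp (2 * Real.pi * (ℓ : ℝ) / K) *
      Real.sqrt (lam ^ 2 - (yFix K ℓ - yFix K ℓ ^ δ) ^ 2)

/-- `μ_s(ℓ)`, the stable eigenvalue at `p_ℓ`. -/
noncomputable def muS (K δ lam : ℝ) (ℓ : ℕ) : ℝ :=
  (traceFix K δ lam ℓ + Real.sqrt (traceFix K δ lam ℓ ^ 2 - 4 * detFix K δ ℓ)) / 2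

/-- `μ_u(ℓ)`, the unstable eigenvalue at `p_ℓ`. -/
noncomputable def muU (K δ lam : ℝ) (ℓ : ℕ) : ℝ :=
  (traceFix K δ lam ℓ - Real.sqrt (traceFix K δ lam ℓ ^ 2 - 4 * detFix K δ ℓ)) / 2

/-- `c_ℓ = cos x_ℓ`. -/
noncomputable def cosFix (K δ lam : ℝ) (ℓ : ℕ) : ℝ :=
  Real.sqrt (1 - ((yFix K ℓ - yFix K ℓ ^ δ) / lam) ^ 2)

/-- `M_ℓ`, the derivative of the model first-return map at the fixed point `p_ℓ`. -/
noncomputable def derivFix (K δ lam : ℝ) (ℓ : ℕ) : Matrix (Fin 2) (Fin 2) ℝ :=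
  !![1, -K / yFix K ℓ;
     lam * cosFix K δ lam ℓ,
       δ * yFix K ℓ ^ (δ - 1) - (lam * K / yFix K ℓ) * cosFix K δ lam ℓ]

theorem Matrix.mulVec_eq_smul_of_sq_sub_trace_mul_add_det_eq_zero {R : Type*} [Field R]
    (A : Matrix (Fin 2) (Fin 2) R) (hA : A 0 1 ≠ 0) {μ : R}
    (hμ : μ ^ 2 - A.trace * μ + A.det = 0) :
    A *ᵥ ![1, (μ - A 0 0) / A 0 1] = μ • ![1, (μ - A 0 0) / A 0 1] := by
  rw [trace_fin_two, det_fin_two] at hμ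
  ext i
  fin_cases i <;>
    simp only [mulVec, dotProduct, Fin.sum_univ_two, Fin.zero_eta, Fin.mk_one, Fin.isValue,
      cons_val_zero, cons_val_one, cons_val_fin_one, mul_one, Pi.smul_apply, smul_eq_mul] <;>
    field_simp
  · ring
  · linear_combination -hμ

theorem sq_sub_mul_add_eq_zero_of_quadratic_formula {t d : ℝ} (h : 0 ≤ t ^ 2 - 4 * d) :
    ((t + √(t ^ 2 - 4 * d)) / 2) ^ 2 - t * ((t + √(t ^ 2 - 4 * d)) / 2) + d = 0 ∧
      ((t - √(t ^ 2 - 4 * d)) / 2) ^ 2 - t * ((t - √(t ^ 2 - 4 * d)) / 2) + d = 0 := by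
  have hs := Real.sq_sqrt h
  constructor <;> linear_combination hs / 4

theorem tendsto_sqrt_sq_sub_four_mul_mul {α : Type*} {l : Filter α} {t d y : α → ℝ} {c : ℝ}
    (hy : ∀ x, 0 ≤ y x) (ht : Tendsto (fun x => t x * y x) l (𝓝 c))
    (hd : Tendsto (fun x => d x * y x ^ 2) l (𝓝 0)) :
    Tendsto (fun x => √(t x ^ 2 - 4 * d x) * y x) l (𝓝 |c|) := by
  have h := ((ht.pow 2).sub (hd.const_mul 4)).sqrt
  rw [mul_zero, sub_zero, Real.sqrt_sq_eq_abs] at h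
  refine h.congr fun x => ?_
  rw [← Real.sqrt_sq (hy x), ← Real.sqrt_mul' _ (sq_nonneg _), Real.sqrt_sq (hy x)]
  ring_nf

theorem eventually_sq_sub_four_mul_pos {α : Type*} {l : Filter α} {t d y : α → ℝ} {c : ℝ}
    (hc : c ≠ 0) (ht : Tendsto (fun x => t x * y x) l (𝓝 c))
    (hd : Tendsto (fun x => d x * y x ^ 2) l (𝓝 0)) :
    ∀ᶠ x in l, 0 < t x ^ 2 - 4 * d x := by
  have h := (ht.pow 2).sub (hd.const_mul 4)
  rw [mul_zero, sub_zero] at h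
  filter_upwards [h.eventually (eventually_gt_nhds (pow_pos (abs_pos.2 hc) 2 |>.trans_eq
    (sq_abs c)))] with x hx
  exact pos_of_mul_pos_left (a := t x ^ 2 - 4 * d x) (b := y x ^ 2) (by linear_combination hx)
    (sq_nonneg _)

section derivFix

variable {K δ lam : ℝ} {ℓ : ℕ}

theorem yFix_pos : 0 < yFix K ℓ := Real.exp_pos _

theorem yFix_inv : (yFix K ℓ)⁻¹ = Real.exp (2 * Real.pi * ℓ / K) := by
  rw [yFix, ← Real.exp_neg]
  ring_nf

theorem detFix_eq : detFix K δ ℓ = δ * yFix K ℓ ^ (δ - 1) := by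
  rw [detFix, yFix, ← Real.exp_mul]
  ring_nf

theorem traceFix_eq :
    traceFix K δ lam ℓ =
      1 + detFix K δ ℓ - K / yFix K ℓ * √(lam ^ 2 - (yFix K ℓ - yFix K ℓ ^ δ) ^ 2) := by
  rw [traceFix, ← detFix, div_eq_mul_inv K, yFix_inv]

theorem lam_mul_cosFix (hlam : 0 < lam) :
    lam * cosFix K δ lam ℓ = √(lam ^ 2 - (yFix K ℓ - yFix K ℓ ^ δ) ^ 2) := by
  rw [cosFix, ← Real.sqrt_sq hlam.le, ← Real.sqrt_mul (sq_nonneg lam), Real.sqrt_sq hlam.le]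
  congr 1
  field_simp

theorem trace_derivFix (hlam : 0 < lam) : (derivFix K δ lam ℓ).trace = traceFix K δ lam ℓ := by
  rw [traceFix_eq, detFix_eq, ← lam_mul_cosFix hlam, trace_fin_two]
  simp only [derivFix, of_apply, cons_val', cons_val_zero, cons_val_one, empty_val',
    cons_val_fin_one]
  ring

theorem det_derivFix : (derivFix K δ lam ℓ).det = detFix K δ ℓ := by
  rw [detFix_eq, det_fin_two]
  simp only [derivFix, of_apply, cons_val', cons_val_zero, cons_val_one, empty_val',
    cons_val_fin_one]
  ring

theorem derivFix_mulVec_eq_smul (hK : K ≠ 0) (hlam : 0 < lam) {μ : ℝ}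
    (hμ : μ ^ 2 - traceFix K δ lam ℓ * μ + detFix K δ ℓ = 0) :
    derivFix K δ lam ℓ *ᵥ ![1, (1 - μ) * yFix K ℓ / K] =
      μ • ![1, (1 - μ) * yFix K ℓ / K] := by
  have hy : yFix K ℓ ≠ 0 := yFix_pos.ne'
  have hvec : (μ - derivFix K δ lam ℓ 0 0) / derivFix K δ lam ℓ 0 1 = (1 - μ) * yFix K ℓ / K := by
    simp only [derivFix, of_apply, cons_val', cons_val_zero, cons_val_one, empty_val',
      cons_val_fin_one]
    field_simp
    ring
  rw [← hvec]
  refine mulVec_eq_smul_of_sq_sub_trace_mul_add_det_eq_zero _ ?_ ?_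
  · simpa [derivFix, yFix_pos.ne'] using hK
  · rwa [trace_derivFix hlam, det_derivFix]

theorem tendsto_yFix (hK : 0 < K) : Tendsto (yFix K) atTop (𝓝 0) := by
  have hr : -(2 * Real.pi) / K < 0 := div_neg_of_neg_of_pos (by linarith [Real.pi_pos]) hK
  refine Real.tendsto_exp_atBot.comp <|
    ((tendsto_const_mul_atBot_of_neg hr).2 tendsto_natCast_atTop_atTop).congr fun ℓ => ?_
  ring

theorem tendsto_yFix_rpow (hK : 0 < K) {b : ℝ} (hb : 0 < b) :
    Tendsto (fun ℓ => yFix K ℓ ^ b) atTop (𝓝 0) := by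
  simpa [Real.zero_rpow hb.ne'] using (tendsto_yFix hK).rpow_const (Or.inr hb.le)

theorem tendsto_detFix (hK : 0 < K) (hδ : 1 < δ) : Tendsto (detFix K δ) atTop (𝓝 0) := by
  have h := (tendsto_yFix_rpow hK (sub_pos.2 hδ)).const_mul δ
  rw [mul_zero] at h
  exact h.congr fun ℓ => detFix_eq.symm

theorem tendsto_detFix_mul_sq (hK : 0 < K) (hδ : 1 < δ) :
    Tendsto (fun ℓ => detFix K δ ℓ * yFix K ℓ ^ 2) atTop (𝓝 0) := by
  simpa using (tendsto_detFix hK hδ).mul ((tendsto_yFix hK).pow 2)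

theorem tendsto_traceFix_mul_yFix (hK : 0 < K) (hδ : 1 < δ) (hlam : 0 < lam) :
    Tendsto (fun ℓ => traceFix K δ lam ℓ * yFix K ℓ) atTop (𝓝 (-(K * lam))) := by
  have hy := tendsto_yFix hK
  have hd := tendsto_detFix hK hδ
  have hr : Tendsto (fun ℓ => √(lam ^ 2 - (yFix K ℓ - yFix K ℓ ^ δ) ^ 2)) atTop (𝓝 lam) := by
    have hw := hy.sub (tendsto_yFix_rpow hK (one_pos.trans hδ))
    have h := ((tendsto_const_nhds (x := lam ^ 2)).sub (hw.pow 2)).sqrt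
    simpa [Real.sqrt_sq hlam.le] using h
  have h := (hy.add (hd.mul hy)).sub (hr.const_mul K)
  rw [mul_zero, add_zero, zero_sub] at h
  refine h.congr fun ℓ => ?_
  rw [traceFix_eq]
  field_simp [yFix_pos.ne']

end derivFix

theorem tendsto_one_sub_mul_div {α : Type*} {l : Filter α} {μ y : α → ℝ} {m : ℝ} (K : ℝ)
    (hy : Tendsto y l (𝓝 0)) (hμ : Tendsto (fun x => μ x * y x) l (𝓝 m)) :
    Tendsto (fun x => (1 - μ x) * y x / K) l (𝓝 (-m / K)) := by
  have h := (hy.sub hμ).div_const K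
  rw [zero_sub] at h
  exact h.congr fun x => by ring

/-- explicit eigenvectors of `M_ℓ` and their limiting directions. -/
theorem eigenvectors_derivFix (K δ lam : ℝ) (hK : 0 < K) (hδ : 1 < δ) (hlam : 0 < lam) :
    (∃ L : ℕ, ∀ ℓ ≥ L,
      (derivFix K δ lam ℓ).mulVec ![1, (1 - muS K δ lam ℓ) * yFix K ℓ / K] =
        muS K δ lam ℓ • ![1, (1 - muS K δ lam ℓ) * yFix K ℓ / K] ∧
      (derivFix K δ lam ℓ).mulVec ![1, (1 - muU K δ lam ℓ) * yFix K ℓ / K] =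
        muU K δ lam ℓ • ![1, (1 - muU K δ lam ℓ) * yFix K ℓ / K]) ∧
    Tendsto (fun ℓ => (1 - muS K δ lam ℓ) * yFix K ℓ / K) atTop (𝓝 0) ∧
    Tendsto (fun ℓ => (1 - muU K δ lam ℓ) * yFix K ℓ / K) atTop (𝓝 lam) := by
  have hKlam : 0 < K * lam := mul_pos hK hlam
  have ht := tendsto_traceFix_mul_yFix hK hδ hlam
  have hd := tendsto_detFix_mul_sq hK hδ
  have hs := tendsto_sqrt_sq_sub_four_mul_mul (fun _ => yFix_pos.le) ht hd
  rw [abs_neg, abs_of_pos hKlam] at hs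
  refine ⟨?_, ?_, ?_⟩
  · obtain ⟨L, hL⟩ :=
      eventually_atTop.1 (eventually_sq_sub_four_mul_pos (neg_ne_zero.2 hKlam.ne') ht hd)
    refine ⟨L, fun ℓ hℓ => ?_⟩
    obtain ⟨hS, hU⟩ := sq_sub_mul_add_eq_zero_of_quadratic_formula (hL ℓ hℓ).le
    exact ⟨derivFix_mulVec_eq_smul hK.ne' hlam hS, derivFix_mulVec_eq_smul hK.ne' hlam hU⟩
  · have hμ : Tendsto (fun ℓ => muS K δ lam ℓ * yFix K ℓ) atTop (𝓝 0) := by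
      have h := (ht.add hs).div_const 2
      rw [neg_add_cancel, zero_div] at h
      exact h.congr fun ℓ => by rw [muS]; ring
    simpa using tendsto_one_sub_mul_div K (tendsto_yFix hK) hμ
  · have hμ : Tendsto (fun ℓ => muU K δ lam ℓ * yFix K ℓ) atTop (𝓝 (-(K * lam))) := by
      have h := (ht.sub hs).div_const 2
      rw [show (-(K * lam) - K * lam) / 2 = -(K * lam) by ring] at h
      exact h.congr fun ℓ => by rw [muU]; ring
    simpa [hK.ne'] using tendsto_one_sub_mul_div K (tendsto_yFix hK) hμ
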